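/- arXiv:1507.06681 — 2 statements merged into one kernel-verified Lean document; each statement's English description precedes it below -/
import Mathlib

section
/- Let a, b be real numbers with 1 < a < b. Then π = ( (b²/(b²+1))·K( (a²+1)b/((b²+1)a) ) + (b²/(b²−1))·K( (a²−1)b/((b²−1)a) ) ) / F_D^(3)(1/2; 1/2,1/2,1/2; 1 | a²/b², 1/(a²b²), 1/b⁴). -/
/-! With `l = a / b` and `m = 1 / (a b)` the Lauricella arguments are `l², m², (l m)²`, and the
substitution `u = s²` in the Euler integral gives
`π F_D = ∫₀¹ 2 ds / √((1 - s²)(1 - l² s²)(1 - m² s²)(1 - l² m² s²))`.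
The Landen-type substitutions `t = (1 ± l m) s / (1 ± l m s²)` turn `K((l ± m) / (1 ± l m)) / (1 ± l m)`
into `∫₀¹ (1 ∓ l m s²) ds / √(…)` over the same quartic, and these two integrals add up to `π F_D`. -/

open MeasureTheory Real

/-- Complete elliptic integral of the first kind. -/
noncomputable def ellipticK (k : ℝ) : ℝ :=
  ∫ t in (0:ℝ)..1, 1 / Real.sqrt ((1 - t ^ 2) * (1 - k ^ 2 * t ^ 2))

/-- Complete elliptic integral of the second kind. -/
noncomputable def ellipticE (k : ℝ) : ℝ :=
  ∫ t in (0:ℝ)..1, Real.sqrt (1 - k ^ 2 * t ^ 2) / Real.sqrt (1 - t ^ 2)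

/-- Lauricella hypergeometric function `F_D^(3)` (real arguments), via its
Euler integral representation. -/
noncomputable def FD3 (a b₁ b₂ b₃ c x₁ x₂ x₃ : ℝ) : ℝ :=
  Real.Gamma c / (Real.Gamma a * Real.Gamma (c - a)) *
    ∫ u in (0:ℝ)..1,
      u ^ (a - 1) * (1 - u) ^ (c - a - 1) *
        (1 - x₁ * u) ^ (-b₁) * (1 - x₂ * u) ^ (-b₂) * (1 - x₃ * u) ^ (-b₃)

/-- Appell hypergeometric function `F₁` (real arguments), via its
Euler integral representation. -/
noncomputable def appellF1 (a b₁ b₂ c x y : ℝ) : ℝ :=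
  Real.Gamma c / (Real.Gamma a * Real.Gamma (c - a)) *
    ∫ u in (0:ℝ)..1,
      u ^ (a - 1) * (1 - u) ^ (c - a - 1) * (1 - x * u) ^ (-b₁) * (1 - y * u) ^ (-b₂)

/-- Lauricella hypergeometric function `F_D^(3)` (complex arguments), via its
Euler integral representation with principal branches. -/
noncomputable def FD3C (a b₁ b₂ b₃ c x₁ x₂ x₃ : ℂ) : ℂ :=
  Complex.Gamma c / (Complex.Gamma a * Complex.Gamma (c - a)) *
    ∫ u in (0:ℝ)..1,
      (u : ℂ) ^ (a - 1) * ((1 : ℂ) - (u : ℂ)) ^ (c - a - 1) *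
        (1 - x₁ * (u : ℂ)) ^ (-b₁) * (1 - x₂ * (u : ℂ)) ^ (-b₂) *
        (1 - x₃ * (u : ℂ)) ^ (-b₃)

/-- Lauricella hypergeometric function `F_D^(4)` (complex arguments), via its
Euler integral representation with principal branches. -/
noncomputable def FD4C (a b₁ b₂ b₃ b₄ c x₁ x₂ x₃ x₄ : ℂ) : ℂ :=
  Complex.Gamma c / (Complex.Gamma a * Complex.Gamma (c - a)) *
    ∫ u in (0:ℝ)..1,
      (u : ℂ) ^ (a - 1) * ((1 : ℂ) - (u : ℂ)) ^ (c - a - 1) *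
        (1 - x₁ * (u : ℂ)) ^ (-b₁) * (1 - x₂ * (u : ℂ)) ^ (-b₂) *
        (1 - x₃ * (u : ℂ)) ^ (-b₃) * (1 - x₄ * (u : ℂ)) ^ (-b₄)

open Set

lemma ellipticK_eq_integral_Icc (k : ℝ) :
    ellipticK k = ∫ t in Icc (0:ℝ) 1, 1 / √((1 - t ^ 2) * (1 - k ^ 2 * t ^ 2)) := by
  rw [ellipticK, intervalIntegral.integral_of_le zero_le_one, integral_Icc_eq_integral_Ioc]

lemma integrableOn_ellipticK_integrand {k : ℝ} (hk : k ^ 2 < 1) :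
    IntegrableOn (fun t => 1 / √((1 - t ^ 2) * (1 - k ^ 2 * t ^ 2))) (Icc 0 1) := by
  have hmaj : IntegrableOn (fun t : ℝ => (√(1 - k ^ 2))⁻¹ * (1 - t) ^ (-(1 / 2) : ℝ))
      (Ioo 0 1) := by
    have h := (intervalIntegral.intervalIntegrable_rpow' (r := -(1 / 2)) (a := 0) (b := 1)
      (by norm_num)).comp_sub_left 1
    simp only [sub_zero, sub_self] at h
    exact ((intervalIntegrable_iff_integrableOn_Ioo_of_le zero_le_one).mp h.symm).const_mul _
  rw [integrableOn_Icc_iff_integrableOn_Ioo]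
  refine hmaj.mono' ?_ ?_
  · refine ContinuousOn.aestronglyMeasurable ?_ measurableSet_Ioo
    exact continuousOn_const.div (by fun_prop) fun t ht =>
      (Real.sqrt_pos.2 (mul_pos (by nlinarith [ht.1, ht.2]) (by nlinarith [ht.1, ht.2]))).ne'
  · filter_upwards [self_mem_ae_restrict measurableSet_Ioo] with t ⟨ht0, ht1⟩
    have hk' : 0 < 1 - k ^ 2 := by linarith
    -- the majorant comes from `(1 - t)(1 - k²) ≤ (1 - t²)(1 - k² t²)` on `[0, 1]`
    rw [Real.norm_of_nonneg (by positivity), Real.rpow_neg (by linarith), ← Real.sqrt_eq_rpow,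
      ← mul_inv, ← Real.sqrt_mul hk'.le, one_div]
    refine inv_anti₀ (Real.sqrt_pos.2 (by nlinarith)) (Real.sqrt_le_sqrt ?_)
    nlinarith [mul_nonneg (sub_nonneg.2 ht1.le) (mul_nonneg ht0.le hk'.le),
      mul_nonneg (sub_nonneg.2 ht1.le) (mul_nonneg (sq_nonneg k) (sq_nonneg t)),
      mul_nonneg (mul_nonneg ht0.le (sub_nonneg.2 ht1.le)) (sq_nonneg k)]

lemma ellipticK_pos {k : ℝ} (hk : k ^ 2 < 1) : 0 < ellipticK k := by
  refine intervalIntegral.intervalIntegral_pos_of_pos_on ?_ (fun t ht => ?_) zero_lt_one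
  · rw [intervalIntegrable_iff_integrableOn_Icc_of_le zero_le_one]
    exact integrableOn_ellipticK_integrand hk
  · have := ht.1; have := ht.2
    exact one_div_pos.2 (Real.sqrt_pos.2 (mul_pos (by nlinarith) (by nlinarith)))

noncomputable def landenMap (c s : ℝ) : ℝ := (1 + c) * s / (1 + c * s ^ 2)

lemma hasDerivAt_landenMap {c s : ℝ} (hs : 1 + c * s ^ 2 ≠ 0) :
    HasDerivAt (landenMap c) ((1 + c) * (1 - c * s ^ 2) / (1 + c * s ^ 2) ^ 2) s := by
  refine (((hasDerivAt_id' s).const_mul (1 + c)).div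
    (((hasDerivAt_pow 2 s).const_mul c).const_add 1) hs).congr_deriv ?_
  push_cast
  ring

lemma one_add_mul_sq_pos {c s : ℝ} (hc : c ^ 2 < 1) (hs : s ∈ Icc (0:ℝ) 1) :
    0 < 1 + c * s ^ 2 := by
  have hs2 : s ^ 2 ≤ 1 := pow_le_one₀ hs.1 hs.2
  have : -1 < c := by nlinarith
  rcases le_or_gt 0 c with hc0 | hc0
  · positivity
  · nlinarith

lemma sq_mul_lt_one {l m : ℝ} (hl : l ^ 2 < 1) (hm : m ^ 2 < 1) : (l * m) ^ 2 < 1 := by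
  rw [mul_pow]; nlinarith [sq_nonneg l, sq_nonneg m]

lemma sq_add_div_one_add_mul_lt_one {l m : ℝ} (hl : l ^ 2 < 1) (hm : m ^ 2 < 1) :
    ((l + m) / (1 + l * m)) ^ 2 < 1 := by
  have hc : 0 < 1 + l * m := by nlinarith [sq_mul_lt_one hl hm]
  rw [div_pow, div_lt_one (by positivity)]
  nlinarith [mul_pos (sub_pos.2 hl) (sub_pos.2 hm)]

lemma landenMap_zero (c : ℝ) : landenMap c 0 = 0 := by simp [landenMap]

lemma landenMap_one {c : ℝ} (hc : 1 + c ≠ 0) : landenMap c 1 = 1 := by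
  simp [landenMap, hc]

lemma deriv_landenMap_mul_ellipticK_integrand {l m s : ℝ} (hlm : 1 + l * m ≠ 0)
    (hs : 0 < 1 + l * m * s ^ 2) :
    (1 + l * m) * (1 - l * m * s ^ 2) / (1 + l * m * s ^ 2) ^ 2 *
        (1 / √((1 - landenMap (l * m) s ^ 2) *
          (1 - ((l + m) / (1 + l * m)) ^ 2 * landenMap (l * m) s ^ 2))) =
      (1 + l * m) * (1 - l * m * s ^ 2) /
        √((1 - s ^ 2) * (1 - l ^ 2 * s ^ 2) * (1 - m ^ 2 * s ^ 2) * (1 - (l * m) ^ 2 * s ^ 2)) := by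
  -- both factors of `K`'s integrand split: `(1 + c s²)² - ((1 + c) s)² = (1 - s²)(1 - c² s²)` and
  -- `(1 + l m s²)² - ((l + m) s)² = (1 - l² s²)(1 - m² s²)`
  have hsplit : (1 - landenMap (l * m) s ^ 2) *
      (1 - ((l + m) / (1 + l * m)) ^ 2 * landenMap (l * m) s ^ 2) =
      (1 - s ^ 2) * (1 - l ^ 2 * s ^ 2) * (1 - m ^ 2 * s ^ 2) * (1 - (l * m) ^ 2 * s ^ 2) /
        ((1 + l * m * s ^ 2) ^ 2) ^ 2 := by
    unfold landenMap
    field_simp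
    ring
  rw [hsplit, Real.sqrt_div' _ (by positivity), Real.sqrt_sq (by positivity), one_div_div,
    div_mul_div_cancel₀ (by positivity)]

theorem ellipticK_landen {l m : ℝ} (hl : l ^ 2 < 1) (hm : m ^ 2 < 1) :
    IntegrableOn (fun s => (1 - l * m * s ^ 2) /
        √((1 - s ^ 2) * (1 - l ^ 2 * s ^ 2) * (1 - m ^ 2 * s ^ 2) * (1 - (l * m) ^ 2 * s ^ 2)))
      (Icc 0 1) ∧
    (1 + l * m)⁻¹ * ellipticK ((l + m) / (1 + l * m)) = ∫ s in Icc (0:ℝ) 1, (1 - l * m * s ^ 2) /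
        √((1 - s ^ 2) * (1 - l ^ 2 * s ^ 2) * (1 - m ^ 2 * s ^ 2) * (1 - (l * m) ^ 2 * s ^ 2)) := by
  have hc : (l * m) ^ 2 < 1 := sq_mul_lt_one hl hm
  have hc₀ : 0 < 1 + l * m := by nlinarith
  have hden (s : ℝ) (hs : s ∈ Icc (0:ℝ) 1) : 0 < 1 + l * m * s ^ 2 := one_add_mul_sq_pos hc hs
  have hderiv (s : ℝ) (hs : s ∈ Icc (0:ℝ) 1) := hasDerivAt_landenMap (hden s hs).ne'
  have hcont : ContinuousOn (landenMap (l * m)) (Icc 0 1) :=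
    fun s hs => (hderiv s hs).continuousAt.continuousWithinAt
  have hmono (s : ℝ) (hs : s ∈ Ioo (0:ℝ) 1) :
      0 ≤ (1 + l * m) * (1 - l * m * s ^ 2) / (1 + l * m * s ^ 2) ^ 2 := by
    have h₁ := one_add_mul_sq_pos (c := -(l * m)) (by rwa [neg_sq]) (Ioo_subset_Icc_self hs)
    rw [neg_mul, ← sub_eq_add_neg] at h₁
    have h₂ := hden s (Ioo_subset_Icc_self hs)
    positivity
  have hends : Icc (landenMap (l * m) 0) (landenMap (l * m) 1) = Icc 0 1 := by
    rw [landenMap_zero, landenMap_one hc₀.ne']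
  have hintegrand : EqOn
      (fun s => ((1 + l * m) * (1 - l * m * s ^ 2) / (1 + l * m * s ^ 2) ^ 2) •
        (1 / √((1 - landenMap (l * m) s ^ 2) *
          (1 - ((l + m) / (1 + l * m)) ^ 2 * landenMap (l * m) s ^ 2))))
      (fun s => (1 + l * m) * ((1 - l * m * s ^ 2) / √((1 - s ^ 2) * (1 - l ^ 2 * s ^ 2) *
        (1 - m ^ 2 * s ^ 2) * (1 - (l * m) ^ 2 * s ^ 2)))) (Icc 0 1) := fun s hs => by
    simp only [smul_eq_mul]
    rw [deriv_landenMap_mul_ellipticK_integrand hc₀.ne' (hden s hs), mul_div_assoc]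
  constructor
  · have h := (integrableOn_Icc_deriv_smul_iff_of_deriv_nonneg hcont
      (fun s hs => hderiv s (Ioo_subset_Icc_self hs)) hmono zero_le_one).2
      (hends ▸ integrableOn_ellipticK_integrand (sq_add_div_one_add_mul_lt_one hl hm))
    rwa [integrableOn_congr_fun hintegrand measurableSet_Icc, IntegrableOn,
      integrable_const_mul_iff (isUnit_iff_ne_zero.2 hc₀.ne')] at h
  · rw [ellipticK_eq_integral_Icc]
    conv_lhs => rw [← hends, ← integral_Icc_deriv_smul_of_deriv_nonneg hcont
      (fun s hs => hderiv s (Ioo_subset_Icc_self hs)) hmono zero_le_one]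
    rw [setIntegral_congr_fun measurableSet_Icc hintegrand, integral_const_mul,
      inv_mul_cancel_left₀ hc₀.ne']

theorem ellipticK_add_ellipticK {l m : ℝ} (hl : l ^ 2 < 1) (hm : m ^ 2 < 1) :
    (1 + l * m)⁻¹ * ellipticK ((l + m) / (1 + l * m)) +
        (1 - l * m)⁻¹ * ellipticK ((l - m) / (1 - l * m)) =
      ∫ s in Icc (0:ℝ) 1, 2 /
        √((1 - s ^ 2) * (1 - l ^ 2 * s ^ 2) * (1 - m ^ 2 * s ^ 2) * (1 - (l * m) ^ 2 * s ^ 2)) := by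
  obtain ⟨hi₁, he₁⟩ := ellipticK_landen hl hm
  obtain ⟨hi₂, he₂⟩ := ellipticK_landen hl (m := -m) (by rwa [neg_sq])
  simp only [mul_neg, neg_mul, neg_sq, ← sub_eq_add_neg, sub_neg_eq_add] at hi₂ he₂
  rw [he₁, he₂, ← integral_add hi₁ hi₂]
  congr 1 with s
  ring

lemma one_sub_mul_sq_pos {x s : ℝ} (hx : x ≤ 1) (hs : s ∈ Ioo (0:ℝ) 1) : 0 < 1 - x * s ^ 2 := by
  have : s ^ 2 < 1 := pow_lt_one₀ hs.1.le hs.2 two_ne_zero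
  nlinarith [mul_le_mul_of_nonneg_right hx (sq_nonneg s)]

lemma rpow_neg_half {w : ℝ} (hw : 0 ≤ w) : w ^ (-(1 / 2) : ℝ) = (√w)⁻¹ := by
  rw [Real.rpow_neg hw, Real.sqrt_eq_rpow]

theorem FD3_half_eq_integral {x y z : ℝ} (hx : x ≤ 1) (hy : y ≤ 1) (hz : z ≤ 1) :
    FD3 (1/2) (1/2) (1/2) (1/2) 1 x y z =
      π⁻¹ * ∫ s in Icc (0:ℝ) 1, 2 /
        √((1 - s ^ 2) * (1 - x * s ^ 2) * (1 - y * s ^ 2) * (1 - z * s ^ 2)) := by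
  have hΓ : Gamma 1 / (Gamma (1 / 2) * Gamma (1 - 1 / 2)) = π⁻¹ := by
    rw [show (1:ℝ) - 1 / 2 = 1 / 2 by norm_num, Gamma_one, Gamma_one_half_eq,
      mul_self_sqrt pi_pos.le, one_div]
  have hsq := integral_Icc_deriv_smul_of_deriv_nonneg (f := fun s => s ^ 2) (f' := fun s => 2 * s)
    (by fun_prop) (fun s _ => by simpa using hasDerivAt_pow 2 s)
    (fun s hs => by have := hs.1; positivity) zero_le_one
    (g := fun u => u ^ ((1:ℝ) / 2 - 1) * (1 - u) ^ ((1:ℝ) - 1 / 2 - 1) *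
      (1 - x * u) ^ (-(1 / 2) : ℝ) * (1 - y * u) ^ (-(1 / 2) : ℝ) * (1 - z * u) ^ (-(1 / 2) : ℝ))
  simp only [ne_eq, OfNat.ofNat_ne_zero, not_false_eq_true, zero_pow, one_pow] at hsq
  rw [FD3, hΓ, intervalIntegral.integral_of_le zero_le_one, ← integral_Icc_eq_integral_Ioc, ← hsq,
    integral_Icc_eq_integral_Ioo, integral_Icc_eq_integral_Ioo]
  congr 1
  refine setIntegral_congr_fun measurableSet_Ioo fun s hs => ?_
  have h₁ := one_sub_mul_sq_pos le_rfl hs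
  have h₂ := one_sub_mul_sq_pos hx hs
  have h₃ := one_sub_mul_sq_pos hy hs
  have h₄ := one_sub_mul_sq_pos hz hs
  rw [one_mul] at h₁
  rw [show (1:ℝ) / 2 - 1 = -(1 / 2) by norm_num, show (1:ℝ) - 1 / 2 - 1 = -(1 / 2) by norm_num]
  simp only [smul_eq_mul]
  rw [rpow_neg_half (sq_nonneg s), rpow_neg_half h₁.le, rpow_neg_half h₂.le, rpow_neg_half h₃.le,
    rpow_neg_half h₄.le, Real.sqrt_sq hs.1.le, Real.sqrt_mul (by positivity),
    Real.sqrt_mul (by positivity), Real.sqrt_mul h₁.le]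
  field_simp [hs.1.ne']

theorem pi_eq_ellipticK_add_ellipticK_div_FD3 {l m : ℝ} (hl : l ^ 2 < 1) (hm : m ^ 2 < 1) :
    π = ((1 + l * m)⁻¹ * ellipticK ((l + m) / (1 + l * m)) +
          (1 - l * m)⁻¹ * ellipticK ((l - m) / (1 - l * m))) /
        FD3 (1/2) (1/2) (1/2) (1/2) 1 (l ^ 2) (m ^ 2) ((l * m) ^ 2) := by
  have hc := sq_mul_lt_one hl hm
  have hKp := ellipticK_pos (sq_add_div_one_add_mul_lt_one hl hm)
  have hKm : 0 < ellipticK ((l - m) / (1 - l * m)) := ellipticK_pos <| by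
    simpa [← sub_eq_add_neg] using sq_add_div_one_add_mul_lt_one hl (m := -m) (by rwa [neg_sq])
  have hS : 0 < (1 + l * m)⁻¹ * ellipticK ((l + m) / (1 + l * m)) +
      (1 - l * m)⁻¹ * ellipticK ((l - m) / (1 - l * m)) :=
    add_pos (mul_pos (inv_pos.2 (by nlinarith)) hKp) (mul_pos (inv_pos.2 (by nlinarith)) hKm)
  rw [FD3_half_eq_integral hl.le hm.le hc.le, ← ellipticK_add_ellipticK hl hm, mul_comm π⁻¹,
    ← div_div, div_self hS.ne', one_div, inv_inv]

theorem stmt_1 (a b : ℝ) (ha : 1 < a) (hab : a < b) :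
    π = ((b^2 / (b^2 + 1)) * ellipticK ((a^2 + 1) * b / ((b^2 + 1) * a)) +
          (b^2 / (b^2 - 1)) * ellipticK ((a^2 - 1) * b / ((b^2 - 1) * a))) /
        FD3 (1/2) (1/2) (1/2) (1/2) 1 (a^2/b^2) (1/(a^2*b^2)) (1/b^4) := by
  have ha₀ : 0 < a := by linarith
  have hb : 1 < b := ha.trans hab
  have hb₀ : 0 < b := by linarith
  have hb₁ : b ^ 2 - 1 ≠ 0 := by nlinarith
  have hl : (a / b) ^ 2 < 1 := by rw [div_pow, div_lt_one (by positivity)]; nlinarith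
  have hm : (1 / (a * b)) ^ 2 < 1 := by
    rw [div_pow, one_pow, div_lt_one (by positivity)]
    nlinarith [mul_lt_mul'' ha hb zero_le_one zero_le_one]
  convert pi_eq_ellipticK_add_ellipticK_div_FD3 hl hm using 4 <;> field_simp
end

section
/- Let a, b be real numbers with 1 < a < b. Then π = ( √((b²−a²)(a²b²−1)) / (a b² √(b⁴−1)) ) · ( (b²+1)·K( b(a²−1)/(a(b²−1)) ) + (b²−1)·K( b(a²+1)/(a(b²+1)) ) ) / F_D^(3)(1/2; 1/2,1/2,1/2; 1 | 1/(1−b⁴), 1/(1−a²b²), a²/(a²−b²) ). -/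
open MeasureTheory Real

open Set

/-!
The substitution `t = (d - 1) √v / (d - v)`, for `|d| > 1`, maps `(0, 1)` monotonically onto
itself and turns `K(k)` into
`∫₀¹ (d - 1)(d + v) dv / (2 √(v (1 - v) (d² - v) ((d - v)² - k² (d - 1)² v)))`.
For `d = ± b²` and the two moduli of the theorem, the last factor is `(a²b² - v)(b² - a²v) / a²`
in both cases, so both integrals have the same quintic `Q` under the root, and
`(b² + 1) K₁ + (b² - 1) K₂` collapses to `a b² (b⁴ - 1) ∫₀¹ dv / √Q(v)`.
On the other side `F_D(1/2; 1/2, 1/2, 1/2; 1 | x)` is `π⁻¹ ∫₀¹ du / √(u (1 - u) ∏ (1 - xᵢ u))`,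
and after `u ↦ 1 - u` the product under the root is `Q / ((b⁴ - 1)(b² - a²)(a²b² - 1))`.
-/

lemma rpow_neg_one_half_eq_inv_sqrt {x : ℝ} (hx : 0 ≤ x) : x ^ (-(1 / 2) : ℝ) = (√x)⁻¹ := by
  rw [rpow_neg hx, sqrt_eq_rpow]

lemma sq_lt_one_of_pos_of_lt {p q : ℝ} (hp : 0 < p) (hpq : p < q) : (p / q) ^ 2 < 1 :=
  pow_lt_one₀ (div_pos hp (hp.trans hpq)).le ((div_lt_one (hp.trans hpq)).2 hpq) two_ne_zero

lemma one_lt_abs_sq {b : ℝ} (hb : 1 < b) : 1 < |b ^ 2| := by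
  rw [abs_of_pos (by positivity)]
  nlinarith

lemma one_lt_pow_four_and_one_lt_mul_and_lt {a b : ℝ} (ha : 1 < a) (hab : a < b) :
    1 < b ^ 4 ∧ 1 < a ^ 2 * b ^ 2 ∧ a ^ 2 < b ^ 2 := by
  have hb : 1 < b := ha.trans hab
  refine ⟨one_lt_pow₀ hb four_ne_zero, one_lt_mul_of_lt_of_le (one_lt_pow₀ ha two_ne_zero)
    (one_lt_pow₀ hb two_ne_zero).le, pow_lt_pow_left₀ hab (by linarith) two_ne_zero⟩

noncomputable def ellipticKIntegrand (k t : ℝ) : ℝ := 1 / √((1 - t ^ 2) * (1 - k ^ 2 * t ^ 2))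

lemma ellipticK_eq_setIntegral (k : ℝ) :
    ellipticK k = ∫ t in Ioo 0 1, ellipticKIntegrand k t := by
  rw [ellipticK, intervalIntegral.integral_of_le zero_le_one, integral_Ioc_eq_integral_Ioo]
  rfl

lemma integrableOn_ellipticKIntegrand {k : ℝ} (hk : k ^ 2 < 1) :
    IntegrableOn (ellipticKIntegrand k) (Ioo 0 1) := by
  have hk0 : 0 < 1 - k ^ 2 := by linarith
  have hdom :
      IntegrableOn (fun t : ℝ => (√(1 - k ^ 2))⁻¹ * (1 - t) ^ (-(1 / 2) : ℝ)) (Ioo 0 1) := by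
    have h := ((intervalIntegral.intervalIntegrable_rpow' (a := 0) (b := 1) (r := -(1 / 2))
      (by norm_num)).comp_sub_left 1).symm.const_mul (√(1 - k ^ 2))⁻¹
    norm_num only [sub_zero, sub_self] at h
    exact (intervalIntegrable_iff_integrableOn_Ioo_of_le zero_le_one).1 h
  refine hdom.mono' (Measurable.aestronglyMeasurable (by unfold ellipticKIntegrand; fun_prop)) ?_
  rw [ae_restrict_iff' measurableSet_Ioo]
  filter_upwards with t ⟨ht0, ht1⟩
  have hle : (1 - k ^ 2) * (1 - t) ≤ (1 - t ^ 2) * (1 - k ^ 2 * t ^ 2) := by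
    have e1 : 1 - t ≤ 1 - t ^ 2 := by nlinarith
    have e2 : 1 - k ^ 2 ≤ 1 - k ^ 2 * t ^ 2 := by nlinarith [sq_nonneg k]
    rw [mul_comm (1 - t ^ 2)]
    exact mul_le_mul e2 e1 (by linarith) (by nlinarith)
  rw [rpow_neg_one_half_eq_inv_sqrt (by linarith), ← mul_inv, ← sqrt_mul hk0.le, ellipticKIntegrand,
    norm_of_nonneg (by positivity), one_div]
  exact inv_anti₀ (sqrt_pos.2 (mul_pos hk0 (by linarith))) (sqrt_le_sqrt hle)

noncomputable def ellipticSubst (d v : ℝ) : ℝ := (d - 1) * √v / (d - v)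

noncomputable def ellipticSubstDeriv (d v : ℝ) : ℝ := (d - 1) * (d + v) / (2 * √v * (d - v) ^ 2)

noncomputable def ellipticKSubstIntegrand (d k v : ℝ) : ℝ :=
  (d - 1) * (d + v) / (2 * √(v * (1 - v) * (d ^ 2 - v) * ((d - v) ^ 2 - k ^ 2 * (d - 1) ^ 2 * v)))

section ellipticSubst

variable {d k v : ℝ}

lemma ellipticSubst_sq (hv : 0 ≤ v) :
    ellipticSubst d v ^ 2 = (d - 1) ^ 2 * v / (d - v) ^ 2 := by
  rw [ellipticSubst, div_pow, mul_pow, sq_sqrt hv]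

lemma hasDerivAt_ellipticSubst (hv : 0 < v) (hdv : d - v ≠ 0) :
    HasDerivAt (ellipticSubst d) (ellipticSubstDeriv d v) v := by
  have h : HasDerivAt (fun x => (d - 1) * √x / (d - x)) _ v :=
    ((hasDerivAt_sqrt hv.ne').const_mul (d - 1)).div ((hasDerivAt_id v).const_sub d) hdv
  refine h.congr_deriv ?_
  have hs : √v ≠ 0 := (sqrt_pos.2 hv).ne'
  rw [ellipticSubstDeriv]
  field_simp
  rw [sq_sqrt hv.le]
  ring

lemma sub_ne_zero_of_one_lt_abs (hd : 1 < |d|) (hv : v ∈ Icc 0 1) : d - v ≠ 0 := by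
  obtain ⟨hv0, hv1⟩ := hv
  rcases lt_abs.1 hd with h | h
  · exact (by linarith : 0 < d - v).ne'
  · exact (by linarith : d - v < 0).ne

lemma ellipticSubst_factors_pos (hd : 1 < |d|) (hv : v ∈ Ioo 0 1) :
    0 < (d - 1) * (d - v) ∧ 0 < (d - 1) * (d + v) ∧ 0 < d ^ 2 - v := by
  obtain ⟨hv0, hv1⟩ := hv
  rcases lt_abs.1 hd with h | h <;> refine ⟨?_, ?_, ?_⟩ <;> nlinarith

lemma ellipticSubstDeriv_pos (hd : 1 < |d|) (hv : v ∈ Ioo 0 1) : 0 < ellipticSubstDeriv d v := by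
  obtain ⟨h₁, h₂, -⟩ := ellipticSubst_factors_pos hd hv
  have : d - v ≠ 0 := right_ne_zero_of_mul h₁.ne'
  have := sqrt_pos.2 hv.1
  unfold ellipticSubstDeriv
  positivity

lemma ellipticSubst_mem_Ioo (hd : 1 < |d|) (hv : v ∈ Ioo 0 1) : ellipticSubst d v ∈ Ioo 0 1 := by
  obtain ⟨h₁, -, h₃⟩ := ellipticSubst_factors_pos hd hv
  have hdv : d - v ≠ 0 := right_ne_zero_of_mul h₁.ne'
  have hpos : 0 < ellipticSubst d v := by
    rw [ellipticSubst, mul_div_right_comm, ← mul_div_mul_right _ _ hdv]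
    exact mul_pos (div_pos h₁ (mul_self_pos.2 hdv)) (sqrt_pos.2 hv.1)
  refine ⟨hpos, (sq_lt_one_iff₀ hpos.le).1 ?_⟩
  rw [ellipticSubst_sq hv.1.le, div_lt_one (by positivity)]
  nlinarith [hv.1, hv.2]

lemma ellipticSubstDeriv_mul_ellipticKIntegrand (k : ℝ) (hv : 0 < v) (hdv : d - v ≠ 0) :
    ellipticSubstDeriv d v * ellipticKIntegrand k (ellipticSubst d v) =
      ellipticKSubstIntegrand d k v := by
  have hs : √v ≠ 0 := (sqrt_pos.2 hv).ne'
  have hprod : (1 - ellipticSubst d v ^ 2) * (1 - k ^ 2 * ellipticSubst d v ^ 2) =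
      (1 - v) * (d ^ 2 - v) * ((d - v) ^ 2 - k ^ 2 * (d - 1) ^ 2 * v) / ((d - v) ^ 2) ^ 2 := by
    rw [ellipticSubst_sq hv.le]
    field_simp
    ring
  rw [ellipticKIntegrand, hprod, sqrt_div' _ (by positivity), sqrt_sq (by positivity),
    ellipticSubstDeriv, ellipticKSubstIntegrand, mul_assoc v, mul_assoc v, sqrt_mul hv.le]
  field_simp


lemma image_ellipticSubst_Ioo (hd : 1 < |d|) : ellipticSubst d '' Ioo 0 1 = Ioo 0 1 := by
  refine Subset.antisymm (image_subset_iff.2 fun v hv => ellipticSubst_mem_Ioo hd hv) ?_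
  have hdv : ∀ v ∈ Icc (0 : ℝ) 1, d - v ≠ 0 := fun v hv => sub_ne_zero_of_one_lt_abs hd hv
  have hcont : ContinuousOn (ellipticSubst d) (Icc 0 1) :=
    ((continuous_const.mul continuous_sqrt).continuousOn).div
      (continuous_const.sub continuous_id).continuousOn hdv
  have h0 : ellipticSubst d 0 = 0 := by simp [ellipticSubst]
  have h1 : ellipticSubst d 1 = 1 := by simp [ellipticSubst, div_self (hdv 1 ⟨zero_le_one, le_rfl⟩)]
  simpa [h0, h1] using intermediate_value_Ioo zero_le_one hcont

lemma hasDerivWithinAt_ellipticSubst (hd : 1 < |d|) :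
    ∀ v ∈ Ioo (0 : ℝ) 1, HasDerivWithinAt (ellipticSubst d) (ellipticSubstDeriv d v) (Ioo 0 1) v :=
  fun _ hv => (hasDerivAt_ellipticSubst hv.1
    (sub_ne_zero_of_one_lt_abs hd (Ioo_subset_Icc_self hv))).hasDerivWithinAt

lemma monotoneOn_ellipticSubst (hd : 1 < |d|) : MonotoneOn (ellipticSubst d) (Ioo 0 1) := by
  have h := hasDerivWithinAt_ellipticSubst hd
  refine monotoneOn_of_hasDerivWithinAt_nonneg (f' := ellipticSubstDeriv d) (convex_Ioo 0 1)
    (fun v hv => (h v hv).continuousWithinAt) ?_ ?_ <;> rw [interior_Ioo]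
  · exact h
  · exact fun v hv => (ellipticSubstDeriv_pos hd hv).le

lemma ellipticSubstDeriv_mul_eqOn (hd : 1 < |d|) :
    EqOn (fun v => ellipticSubstDeriv d v • ellipticKIntegrand k (ellipticSubst d v))
      (ellipticKSubstIntegrand d k) (Ioo 0 1) := fun _ hv =>
  ellipticSubstDeriv_mul_ellipticKIntegrand k hv.1
    (sub_ne_zero_of_one_lt_abs hd (Ioo_subset_Icc_self hv))

lemma integrableOn_ellipticKSubstIntegrand (hd : 1 < |d|) (hk : k ^ 2 < 1) :
    IntegrableOn (ellipticKSubstIntegrand d k) (Ioo 0 1) := by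
  have h := integrableOn_ellipticKIntegrand hk
  rw [← image_ellipticSubst_Ioo hd, integrableOn_image_iff_integrableOn_deriv_smul_of_monotoneOn
    measurableSet_Ioo (hasDerivWithinAt_ellipticSubst hd) (monotoneOn_ellipticSubst hd)] at h
  exact h.congr_fun (ellipticSubstDeriv_mul_eqOn hd) measurableSet_Ioo

lemma ellipticK_eq_integral_ellipticKSubstIntegrand (hd : 1 < |d|) :
    ellipticK k = ∫ v in Ioo 0 1, ellipticKSubstIntegrand d k v := by
  calc ellipticK k = ∫ t in ellipticSubst d '' Ioo 0 1, ellipticKIntegrand k t := by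
        rw [image_ellipticSubst_Ioo hd, ellipticK_eq_setIntegral]
    _ = ∫ v in Ioo 0 1, ellipticSubstDeriv d v • ellipticKIntegrand k (ellipticSubst d v) :=
        integral_image_eq_integral_deriv_smul_of_monotoneOn measurableSet_Ioo
          (hasDerivWithinAt_ellipticSubst hd) (monotoneOn_ellipticSubst hd) _
    _ = ∫ v in Ioo 0 1, ellipticKSubstIntegrand d k v :=
        setIntegral_congr_fun measurableSet_Ioo (ellipticSubstDeriv_mul_eqOn hd)

end ellipticSubst

noncomputable def ellipticQuintic (a b v : ℝ) : ℝ :=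
  v * (1 - v) * (b ^ 4 - v) * (a ^ 2 * b ^ 2 - v) * (b ^ 2 - a ^ 2 * v)

section ellipticQuintic

variable {a b : ℝ}

lemma ellipticQuintic_pos (ha : 1 < a) (hab : a < b) {v : ℝ} (hv : v ∈ Ioo 0 1) :
    0 < ellipticQuintic a b v := by
  obtain ⟨hv0, hv1⟩ := hv
  obtain ⟨hb4, he, hab2⟩ := one_lt_pow_four_and_one_lt_mul_and_lt ha hab
  have h₁ : 0 < b ^ 4 - v := by linarith
  have h₂ : 0 < a ^ 2 * b ^ 2 - v := by linarith
  have h₃ : 0 < b ^ 2 - a ^ 2 * v := by nlinarith [sq_nonneg a]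
  have h₄ : 0 < 1 - v := by linarith
  unfold ellipticQuintic
  positivity

-- `hk` and `hd` say that `a² ((d - v)² - k² (d - 1)² v) = (a²b² - v)(b² - a²v)` for all `v`.
lemma ellipticKSubstIntegrand_eq {d k : ℝ} (ha : 0 < a) (hd : d ^ 2 = b ^ 4)
    (hk : a ^ 2 * k ^ 2 * (d - 1) ^ 2 = (a ^ 4 + 1) * b ^ 2 - 2 * a ^ 2 * d) (v : ℝ) :
    ellipticKSubstIntegrand d k v = a * ((d - 1) * (d + v)) / (2 * √(ellipticQuintic a b v)) := by
  have hpoly : v * (1 - v) * (d ^ 2 - v) * ((d - v) ^ 2 - k ^ 2 * (d - 1) ^ 2 * v) =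
      ellipticQuintic a b v / a ^ 2 := by
    rw [ellipticQuintic, hd, eq_div_iff (by positivity)]
    linear_combination
      (-(v * (1 - v) * (b ^ 4 - v) * v)) * hk + a ^ 2 * v * (1 - v) * (b ^ 4 - v) * hd
  rw [ellipticKSubstIntegrand, hpoly, sqrt_div' _ (sq_nonneg a), sqrt_sq ha.le, mul_div_assoc',
    div_div_eq_mul_div, mul_comm]

lemma inv_sqrt_ellipticQuintic_eq (ha : 1 < a) (hab : a < b) (v : ℝ) :
    (√(ellipticQuintic a b v))⁻¹ = (a * b ^ 2 * (b ^ 4 - 1))⁻¹ *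
      ((b ^ 2 + 1) * ellipticKSubstIntegrand (b ^ 2) (b * (a ^ 2 - 1) / (a * (b ^ 2 - 1))) v +
        (b ^ 2 - 1) * ellipticKSubstIntegrand (-b ^ 2) (b * (a ^ 2 + 1) / (a * (b ^ 2 + 1))) v) := by
  obtain ⟨hb4, -, hab2⟩ := one_lt_pow_four_and_one_lt_mul_and_lt ha hab
  have ha0 : 0 < a := by positivity
  have hb0 : b ≠ 0 := (zero_lt_one.trans (ha.trans hab)).ne'
  have hb2 : b ^ 2 - 1 ≠ 0 := by nlinarith
  have hb4' : b ^ 4 - 1 ≠ 0 := by linarith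
  rw [ellipticKSubstIntegrand_eq ha0 (by ring) (by field_simp; ring),
    ellipticKSubstIntegrand_eq ha0 (by ring) (by field_simp; ring)]
  field_simp
  ring

lemma integrableOn_ellipticKSubstIntegrand_pair (ha : 1 < a) (hab : a < b) :
    IntegrableOn (ellipticKSubstIntegrand (b ^ 2) (b * (a ^ 2 - 1) / (a * (b ^ 2 - 1)))) (Ioo 0 1) ∧
      IntegrableOn (ellipticKSubstIntegrand (-b ^ 2) (b * (a ^ 2 + 1) / (a * (b ^ 2 + 1))))
        (Ioo 0 1) := by
  have hb : 1 < b := ha.trans hab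
  have hba : 0 < b - a := sub_pos.2 hab
  have hab1 : 1 < a * b := by nlinarith
  refine ⟨integrableOn_ellipticKSubstIntegrand (one_lt_abs_sq hb) ?_,
    integrableOn_ellipticKSubstIntegrand (by rw [abs_neg]; exact one_lt_abs_sq hb) ?_⟩
  · exact sq_lt_one_of_pos_of_lt (by nlinarith)
      (by nlinarith [mul_pos hba (by linarith : 0 < a * b + 1)])
  · exact sq_lt_one_of_pos_of_lt (by positivity)
      (by nlinarith [mul_pos hba (by linarith : 0 < a * b - 1)])

lemma integrableOn_inv_sqrt_ellipticQuintic (ha : 1 < a) (hab : a < b) :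
    IntegrableOn (fun v => (√(ellipticQuintic a b v))⁻¹) (Ioo 0 1) := by
  obtain ⟨h₁, h₂⟩ := integrableOn_ellipticKSubstIntegrand_pair ha hab
  simp_rw [inv_sqrt_ellipticQuintic_eq ha hab]
  exact ((h₁.const_mul _).add (h₂.const_mul _)).const_mul _

lemma ellipticK_combination_eq_integral (ha : 1 < a) (hab : a < b) :
    (b ^ 2 + 1) * ellipticK (b * (a ^ 2 - 1) / (a * (b ^ 2 - 1))) +
        (b ^ 2 - 1) * ellipticK (b * (a ^ 2 + 1) / (a * (b ^ 2 + 1))) =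
      a * b ^ 2 * (b ^ 4 - 1) * ∫ v in Ioo 0 1, (√(ellipticQuintic a b v))⁻¹ := by
  have hb : 1 < b := ha.trans hab
  have hC : a * b ^ 2 * (b ^ 4 - 1) ≠ 0 := by
    have : b ^ 4 - 1 ≠ 0 := by linarith [(one_lt_pow_four_and_one_lt_mul_and_lt ha hab).1]
    have : b ≠ 0 := (zero_lt_one.trans hb).ne'
    have : a ≠ 0 := by positivity
    positivity
  obtain ⟨h₁, h₂⟩ := integrableOn_ellipticKSubstIntegrand_pair ha hab
  simp_rw [inv_sqrt_ellipticQuintic_eq ha hab]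
  rw [integral_const_mul, integral_add (h₁.const_mul _) (h₂.const_mul _), integral_const_mul,
    integral_const_mul, ← ellipticK_eq_integral_ellipticKSubstIntegrand (one_lt_abs_sq hb),
    ← ellipticK_eq_integral_ellipticKSubstIntegrand (by rw [abs_neg]; exact one_lt_abs_sq hb),
    mul_inv_cancel_left₀ hC]

lemma integral_inv_sqrt_ellipticQuintic_pos (ha : 1 < a) (hab : a < b) :
    0 < ∫ v in Ioo 0 1, (√(ellipticQuintic a b v))⁻¹ := by
  rw [setIntegral_pos_iff_support_of_nonneg_ae (Filter.Eventually.of_forall fun v => by positivity)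
    (integrableOn_inv_sqrt_ellipticQuintic ha hab)]
  have hsupp : Ioo (0 : ℝ) 1 ⊆ Function.support (fun v => (√(ellipticQuintic a b v))⁻¹) ∩ Ioo 0 1 :=
    fun v hv => ⟨(inv_pos.2 (sqrt_pos.2 (ellipticQuintic_pos ha hab hv))).ne', hv⟩
  calc (0 : ENNReal) < volume (Ioo (0 : ℝ) 1) := by simp
    _ ≤ _ := measure_mono hsupp

lemma ellipticQuintic_one_sub_div (ha : 1 < a) (hab : a < b) (u : ℝ) :
    ellipticQuintic a b (1 - u) / ((b ^ 4 - 1) * ((b ^ 2 - a ^ 2) * (a ^ 2 * b ^ 2 - 1))) =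
      u * (1 - u) * (1 - 1 / (1 - b ^ 4) * u) * (1 - 1 / (1 - a ^ 2 * b ^ 2) * u) *
        (1 - a ^ 2 / (a ^ 2 - b ^ 2) * u) := by
  obtain ⟨hb4, he, hab2⟩ := one_lt_pow_four_and_one_lt_mul_and_lt ha hab
  have h₁ : b ^ 4 - 1 ≠ 0 := by linarith
  have h₂ : a ^ 2 * b ^ 2 - 1 ≠ 0 := by linarith
  have h₃ : b ^ 2 - a ^ 2 ≠ 0 := by linarith
  rw [ellipticQuintic, ← neg_sub (b ^ 4), ← neg_sub (a ^ 2 * b ^ 2), ← neg_sub (b ^ 2)]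
  generalize b ^ 4 = p at *
  generalize a ^ 2 * b ^ 2 = q at *
  field_simp
  ring

end ellipticQuintic

lemma FD3_half_half_half_half_one {x₁ x₂ x₃ : ℝ} (h₁ : x₁ ≤ 1) (h₂ : x₂ ≤ 1) (h₃ : x₃ ≤ 1) :
    FD3 (1 / 2) (1 / 2) (1 / 2) (1 / 2) 1 x₁ x₂ x₃ =
      π⁻¹ * ∫ u in (0 : ℝ)..1, (√(u * (1 - u) * (1 - x₁ * u) * (1 - x₂ * u) * (1 - x₃ * u)))⁻¹ := by
  have hΓ : Gamma 1 / (Gamma (1 / 2) * Gamma (1 - 1 / 2)) = π⁻¹ := by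
    rw [Gamma_one, show (1 : ℝ) - 1 / 2 = 1 / 2 by norm_num, Gamma_one_half_eq,
      mul_self_sqrt pi_nonneg, one_div]
  rw [FD3, hΓ, show (1 / 2 : ℝ) - 1 = -(1 / 2) by norm_num,
    show (1 : ℝ) - 1 / 2 - 1 = -(1 / 2) by norm_num]
  congr 1
  refine intervalIntegral.integral_congr fun u hu => ?_
  rw [uIcc_of_le zero_le_one] at hu
  obtain ⟨hu0, hu1⟩ := hu
  have hx : ∀ x : ℝ, x ≤ 1 → 0 ≤ 1 - x * u := fun x hx => by nlinarith
  have := hx _ h₁; have := hx _ h₂; have := hx _ h₃; have : 0 ≤ 1 - u := by linarith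
  rw [← mul_rpow hu0 (by linarith), ← mul_rpow (by positivity) (hx _ h₁),
    ← mul_rpow (by positivity) (hx _ h₂), ← mul_rpow (by positivity) (hx _ h₃),
    rpow_neg_one_half_eq_inv_sqrt (by positivity)]

lemma FD3_eq_integral_inv_sqrt_ellipticQuintic (ha : 1 < a) (hab : a < b) :
    FD3 (1 / 2) (1 / 2) (1 / 2) (1 / 2) 1 (1 / (1 - b ^ 4)) (1 / (1 - a ^ 2 * b ^ 2))
        (a ^ 2 / (a ^ 2 - b ^ 2)) =
      π⁻¹ * (√((b ^ 4 - 1) * ((b ^ 2 - a ^ 2) * (a ^ 2 * b ^ 2 - 1))) *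
        ∫ v in Ioo 0 1, (√(ellipticQuintic a b v))⁻¹) := by
  obtain ⟨hb4, he, hab2⟩ := one_lt_pow_four_and_one_lt_mul_and_lt ha hab
  have hx : ∀ {p q : ℝ}, 0 ≤ p → q < 0 → p / q ≤ 1 := fun hp hq =>
    (div_nonpos_of_nonneg_of_nonpos hp hq.le).trans zero_le_one
  rw [FD3_half_half_half_half_one (hx zero_le_one (by linarith)) (hx zero_le_one (by linarith))
    (hx (sq_nonneg a) (by linarith))]
  have hD : 0 ≤ (b ^ 4 - 1) * ((b ^ 2 - a ^ 2) * (a ^ 2 * b ^ 2 - 1)) := by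
    have := sub_pos.2 hb4; have := sub_pos.2 he; have := sub_pos.2 hab2; positivity
  simp_rw [← ellipticQuintic_one_sub_div ha hab, sqrt_div' _ hD, inv_div, div_eq_mul_inv (√_)]
  rw [intervalIntegral.integral_const_mul, intervalIntegral.integral_comp_sub_left
    (fun v => (√(ellipticQuintic a b v))⁻¹), sub_self, sub_zero,
    intervalIntegral.integral_of_le zero_le_one, integral_Ioc_eq_integral_Ioo]

theorem stmt_13 (a b : ℝ) (ha : 1 < a) (hab : a < b) :
    π = (Real.sqrt ((b^2 - a^2) * (a^2*b^2 - 1)) / (a * b^2 * Real.sqrt (b^4 - 1))) *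
          ((b^2 + 1) * ellipticK (b * (a^2 - 1) / (a * (b^2 - 1))) +
            (b^2 - 1) * ellipticK (b * (a^2 + 1) / (a * (b^2 + 1)))) /
        FD3 (1/2) (1/2) (1/2) (1/2) 1
          (1/(1 - b^4)) (1/(1 - a^2*b^2)) (a^2/(a^2 - b^2)) := by
  obtain ⟨hb4, he, hab2⟩ := one_lt_pow_four_and_one_lt_mul_and_lt ha hab
  have ha0 : a ≠ 0 := by positivity
  have hb0 : b ≠ 0 := (zero_lt_one.trans (ha.trans hab)).ne'
  have hB : 0 < √(b ^ 4 - 1) := sqrt_pos.2 (by linarith)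
  have hM : 0 < √((b ^ 2 - a ^ 2) * (a ^ 2 * b ^ 2 - 1)) :=
    sqrt_pos.2 (mul_pos (by linarith) (by linarith))
  have hI := integral_inv_sqrt_ellipticQuintic_pos ha hab
  rw [ellipticK_combination_eq_integral ha hab, FD3_eq_integral_inv_sqrt_ellipticQuintic ha hab,
    sqrt_mul (x := b ^ 4 - 1) (by linarith)]
  have hs := mul_self_sqrt (by linarith : (0 : ℝ) ≤ b ^ 4 - 1)
  generalize √(b ^ 4 - 1) = s at hB hs ⊢
  rw [← hs]
  generalize √((b ^ 2 - a ^ 2) * (a ^ 2 * b ^ 2 - 1)) = m at hM ⊢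
  generalize ∫ v in Ioo 0 1, (√(ellipticQuintic a b v))⁻¹ = I at hI ⊢
  field_simp
end
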